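/- arXiv:1808.06975 — 4 statements merged into one kernel-verified Lean document; each statement's English description precedes it below -/
import Mathlib

section
/- Let g : (-∞,0) → U(n) be a family of unitary n×n matrices depending on a parameter s, and suppose there exists δ > 0 and c > 0 such that for all l ∈ [n] and all J ⊆ [n] with |J| = l and J ≠ [l] = {1,...,l}, the minor satisfies |Δ_{[l],J}(g(s))| ≤ c·e^{sδ} for all s < 0. Then there exists c' > 0 such that every off-diagonal matrix entry satisfies |g(s)_{i,j}| ≤ c'·e^{sδ} for all i ≠ j and all s < 0. -/
/-!
For `i < j`, write `U i j` as the determinant of `A * Bᴴ`, where `A` consists of rows `0, …, i`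
of `U` and `B` is `A` with its last row replaced by `e_j`. Expanding this determinant in the
style of Cauchy–Binet leaves only minors of `A` whose column set contains `j > i`; these are
non-leading, hence `O(e^{sδ})`, while the coefficients are bounded by `1`.
For `j < i`, unitarity forces the two off-diagonal blocks `rows ≥ m × columns < m` and
`rows < m × columns ≥ m` to have the same Frobenius norm, so the lower triangle is controlled
by the upper one.
-/

open scoped Matrix

open Finset

theorem Finset.exists_perm_orderEmbOfFin_comp {α : Type*} [LinearOrder α] {l : ℕ}
    {p : Fin l → α} (hp : Function.Injective p) (hJ : (univ.image p).card = l) :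
    ∃ σ : Equiv.Perm (Fin l), (univ.image p).orderEmbOfFin hJ ∘ σ = p := by
  set e := (univ.image p).orderIsoOfFin hJ
  let q : Fin l → Fin l := fun b => e.symm ⟨p b, mem_image_of_mem p (mem_univ b)⟩
  have hq : Function.Injective q := fun a b hab => hp (congrArg Subtype.val (e.symm.injective hab))
  refine ⟨Equiv.ofBijective q (Finite.injective_iff_bijective.mp hq), funext fun b => ?_⟩
  simp [q, e, ← coe_orderIsoOfFin_apply]

namespace Matrix

theorem det_mul_eq_sum_prod_mul_det_submatrix {R l m : Type*} [CommRing R] [Fintype l]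
    [DecidableEq l] [Fintype m] (A : Matrix l m R) (C : Matrix m l R) :
    (A * C).det = ∑ p : l → m, (∏ b, C (p b) b) * (A.submatrix id p).det := by
  simp only [det_apply', mul_apply, prod_univ_sum, mul_sum, Fintype.piFinset_univ,
    submatrix_apply, id, prod_mul_distrib]
  rw [sum_comm]
  exact sum_congr rfl fun p _ => sum_congr rfl fun σ _ => by ring

section Unitary

variable {𝕜 ι : Type*} [RCLike 𝕜] [Fintype ι] [DecidableEq ι] {U : Matrix ι ι 𝕜}

theorem sum_norm_sq_row_of_mem_unitaryGroup (hU : U ∈ unitaryGroup ι 𝕜) (k : ι) :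
    ∑ j, ‖U k j‖ ^ 2 = 1 := by
  have h := congr_fun (congr_fun (mem_unitaryGroup_iff.mp hU) k) k
  simp only [mul_apply, star_apply, ← starRingEnd_apply, RCLike.mul_conj, one_apply_eq] at h
  exact_mod_cast h

theorem sum_norm_sq_col_of_mem_unitaryGroup (hU : U ∈ unitaryGroup ι 𝕜) (k : ι) :
    ∑ i, ‖U i k‖ ^ 2 = 1 := by
  simpa [star_apply] using sum_norm_sq_row_of_mem_unitaryGroup (Unitary.star_mem hU) k

theorem sum_sum_compl_norm_sq_eq_of_mem_unitaryGroup (hU : U ∈ unitaryGroup ι 𝕜)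
    (S : Finset ι) :
    ∑ i ∈ Sᶜ, ∑ k ∈ S, ‖U i k‖ ^ 2 = ∑ k ∈ S, ∑ j ∈ Sᶜ, ‖U k j‖ ^ 2 := by
  -- Both sides are `#S` minus the squared norm of the `S × S` block, by rows and by columns.
  have rows : ∑ k ∈ S, (∑ j ∈ S, ‖U k j‖ ^ 2 + ∑ j ∈ Sᶜ, ‖U k j‖ ^ 2) = #S := by
    simp [sum_add_sum_compl, sum_norm_sq_row_of_mem_unitaryGroup hU]
  have cols : ∑ k ∈ S, (∑ i ∈ S, ‖U i k‖ ^ 2 + ∑ i ∈ Sᶜ, ‖U i k‖ ^ 2) = #S := by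
    simp [sum_add_sum_compl, sum_norm_sq_col_of_mem_unitaryGroup hU]
  rw [sum_add_distrib] at rows cols
  rw [sum_comm (s := S)] at cols
  rw [sum_comm]
  linarith

theorem norm_apply_le_of_norm_upper_le [LinearOrder ι] (hU : U ∈ unitaryGroup ι 𝕜)
    {η : ℝ} (hη : ∀ a b, a < b → ‖U a b‖ ≤ η) {i j : ι} (hji : j < i) :
    ‖U i j‖ ≤ Fintype.card ι * η := by
  have hη₀ : 0 ≤ η := (norm_nonneg _).trans (hη j i hji)
  set S := univ.filter (· ≤ j)
  have hiS : i ∈ Sᶜ := by simpa [S] using hji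
  have hjS : j ∈ S := by simp [S]
  have hsq : ‖U i j‖ ^ 2 ≤ (Fintype.card ι * η) ^ 2 :=
    calc ‖U i j‖ ^ 2 ≤ ∑ i' ∈ Sᶜ, ∑ k ∈ S, ‖U i' k‖ ^ 2 :=
          (single_le_sum (fun _ _ => by positivity) hjS).trans
            (single_le_sum (f := fun i' => ∑ k ∈ S, ‖U i' k‖ ^ 2)
              (fun _ _ => by positivity) hiS)
      _ = ∑ k ∈ S, ∑ j' ∈ Sᶜ, ‖U k j'‖ ^ 2 :=
          sum_sum_compl_norm_sq_eq_of_mem_unitaryGroup hU S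
      _ ≤ ∑ k ∈ S, ∑ j' ∈ Sᶜ, η ^ 2 := by
          refine sum_le_sum fun k hk => sum_le_sum fun j' hj' => ?_
          simp only [S, mem_compl, mem_filter_univ, not_le] at hk hj'
          exact pow_le_pow_left₀ (norm_nonneg _) (hη k j' (hk.trans_lt hj')) 2
      _ = #S * (#Sᶜ * η ^ 2) := by simp [nsmul_eq_mul]
      _ ≤ Fintype.card ι * (Fintype.card ι * η ^ 2) := by
          gcongr <;> exact_mod_cast card_le_univ _
      _ = (Fintype.card ι * η) ^ 2 := by ring
  exact (pow_le_pow_iff_left₀ (norm_nonneg _) (by positivity) two_ne_zero).mp hsq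

end Unitary

section Minors

variable {𝕜 : Type*} [RCLike 𝕜] {n : ℕ}

def NonLeadingMinorsLE (U : Matrix (Fin n) (Fin n) 𝕜) (ε : ℝ) : Prop :=
  ∀ (l : ℕ) (hl : l ≤ n) (J : Finset (Fin n)) (hJ : J.card = l),
    J ≠ univ.filter (fun j : Fin n => (j : ℕ) < l) →
    ‖(U.submatrix (Fin.castLE hl) (J.orderEmbOfFin hJ)).det‖ ≤ ε

theorem NonLeadingMinorsLE.norm_det_submatrix_le {U : Matrix (Fin n) (Fin n) 𝕜} {ε : ℝ}
    (h : NonLeadingMinorsLE U ε) {l : ℕ} (hl : l ≤ n) {p : Fin l → Fin n}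
    (hp : Function.Injective p) {b : Fin l} (hb : l ≤ p b) :
    ‖(U.submatrix (Fin.castLE hl) p).det‖ ≤ ε := by
  have hJ : (univ.image p).card = l := by simp [card_image_of_injective _ hp]
  obtain ⟨σ, hσ⟩ := exists_perm_orderEmbOfFin_comp hp hJ
  have hne : univ.image p ≠ univ.filter (fun j : Fin n => (j : ℕ) < l) := fun heq => by
    have := heq ▸ mem_image_of_mem p (mem_univ b)
    simp only [mem_filter_univ] at this
    omega
  rw [← hσ]
  change ‖((U.submatrix (Fin.castLE hl) _).submatrix id σ).det‖ ≤ ε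
  rw [det_permute', norm_mul]
  rcases Int.units_eq_one_or (Equiv.Perm.sign σ) with hs | hs <;>
    simpa [hs] using h l hl _ hJ hne

theorem det_mul_conjTranspose_updateRow_single_eq_apply {U : Matrix (Fin n) (Fin n) 𝕜}
    (hU : U ∈ unitaryGroup (Fin n) 𝕜) (i j : Fin n) :
    let A := U.submatrix (Fin.castLE i.isLt) id
    (A * (A.updateRow (Fin.last i) (Pi.single j 1))ᴴ).det = U i j := by
  intro A
  have hUU := mem_unitaryGroup_iff.mp hU
  have hprod : A * (A.updateRow (Fin.last i) (Pi.single j 1))ᴴ =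
      (1 : Matrix (Fin (i + 1)) (Fin (i + 1)) 𝕜).updateCol (Fin.last i) (fun b => A b j) := by
    ext b b'
    by_cases hb' : b' = Fin.last i
    · subst hb'
      simp [mul_apply, conjTranspose_apply, Pi.single_apply]
    · have := congr_fun (congr_fun hUU (Fin.castLE i.isLt b)) (Fin.castLE i.isLt b')
      simp_all [mul_apply, conjTranspose_apply, star_apply, one_apply, A]
  rw [hprod, ← cramer_apply, cramer_one]
  simp [A, Fin.castLE]

theorem NonLeadingMinorsLE.norm_apply_le_of_lt {U : Matrix (Fin n) (Fin n) 𝕜} {ε : ℝ}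
    (hU : U ∈ unitaryGroup (Fin n) 𝕜) (h : NonLeadingMinorsLE U ε) (hε : 0 ≤ ε)
    {i j : Fin n} (hij : i < j) : ‖U i j‖ ≤ (n + 1) ^ n * ε := by
  set A := U.submatrix (Fin.castLE i.isLt) id
  set B := A.updateRow (Fin.last i) (Pi.single j 1)
  have hB : ∀ b k, ‖B b k‖ ≤ 1 := fun b k => by
    by_cases hb : b = Fin.last i
    · by_cases hk : k = j <;> simp [B, hb, hk]
    · simpa [B, hb, A] using entry_norm_bound_of_unitary hU _ k
  have hterm : ∀ p : Fin (i + 1) → Fin n,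
      ‖(∏ b, Bᴴ (p b) b) * (A.submatrix id p).det‖ ≤ ε := fun p => by
    by_cases hpj : p (Fin.last i) = j
    · by_cases hp : Function.Injective p
      · rw [norm_mul, norm_prod]
        refine (mul_le_of_le_one_left (norm_nonneg _) ?_).trans
          (h.norm_det_submatrix_le i.isLt hp (b := Fin.last i) (hpj ▸ hij))
        exact prod_le_one (fun _ _ => norm_nonneg _) fun b _ => by simpa using hB b (p b)
      · obtain ⟨x, y, hxy, hne⟩ := Function.not_injective_iff.mp hp
        rw [det_zero_of_column_eq hne fun k => by simp [hxy], mul_zero, norm_zero]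
        exact hε
    · rw [prod_eq_zero (mem_univ (Fin.last i)) (by simp [B, hpj]), zero_mul,
        norm_zero]
      exact hε
  have hcard : (Fintype.card (Fin (i + 1) → Fin n) : ℝ) ≤ (n + 1) ^ n := by
    rw [Fintype.card_fun, Fintype.card_fin, Fintype.card_fin, Nat.cast_pow]
    calc (n : ℝ) ^ (i + 1 : ℕ) ≤ (n + 1) ^ (i + 1 : ℕ) := by gcongr; linarith
      _ ≤ (n + 1) ^ n := pow_le_pow_right₀ (by linarith) i.isLt
  calc ‖U i j‖ = ‖∑ p : Fin (i + 1) → Fin n, (∏ b, Bᴴ (p b) b) * (A.submatrix id p).det‖ := by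
        rw [← det_mul_eq_sum_prod_mul_det_submatrix,
          det_mul_conjTranspose_updateRow_single_eq_apply hU]
    _ ≤ ∑ p : Fin (i + 1) → Fin n, ε := (norm_sum_le _ _).trans (sum_le_sum fun p _ => hterm p)
    _ ≤ (n + 1) ^ n * ε := by
        rw [sum_const, card_univ, nsmul_eq_mul]
        gcongr

theorem NonLeadingMinorsLE.norm_apply_le {U : Matrix (Fin n) (Fin n) 𝕜} {ε : ℝ}
    (hU : U ∈ unitaryGroup (Fin n) 𝕜) (h : NonLeadingMinorsLE U ε) (hε : 0 ≤ ε)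
    {i j : Fin n} (hij : i ≠ j) : ‖U i j‖ ≤ (n + 1) ^ (n + 1) * ε := by
  have hupper : ∀ a b : Fin n, a < b → ‖U a b‖ ≤ (n + 1) ^ n * ε :=
    fun a b hab => h.norm_apply_le_of_lt hU hε hab
  rcases hij.lt_or_gt with hlt | hgt
  · calc ‖U i j‖ ≤ (n + 1) ^ n * ε := hupper i j hlt
      _ ≤ (n + 1) ^ (n + 1) * ε := by
          gcongr
          · linarith
          · omega
  · calc ‖U i j‖ ≤ Fintype.card (Fin n) * ((n + 1) ^ n * ε) :=
          norm_apply_le_of_norm_upper_le hU hupper hgt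
      _ ≤ (n + 1) ^ (n + 1) * ε := by
          rw [Fintype.card_fin, pow_succ', mul_assoc]
          gcongr
          linarith

end Minors

end Matrix

theorem offdiag_decay_general (n : ℕ) (g : ℝ → Matrix (Fin n) (Fin n) ℂ)
    (hg : ∀ s < (0 : ℝ), g s ∈ Matrix.unitaryGroup (Fin n) ℂ)
    (δ c : ℝ) (hc : 0 < c)
    (hmin : ∀ (l : ℕ) (hl : l ≤ n) (J : Finset (Fin n)) (hJ : J.card = l),
      J ≠ Finset.univ.filter (fun j : Fin n => (j : ℕ) < l) →
      ∀ s < (0 : ℝ),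
        ‖((g s).submatrix (Fin.castLE hl) (J.orderEmbOfFin hJ)).det‖
          ≤ c * Real.exp (s * δ)) :
    ∃ c' > 0, ∀ (i j : Fin n), i ≠ j → ∀ s < (0 : ℝ),
      ‖g s i j‖ ≤ c' * Real.exp (s * δ) := by
  refine ⟨(n + 1) ^ (n + 1) * c, by positivity, fun i j hij s hs => ?_⟩
  have hminors : Matrix.NonLeadingMinorsLE (g s) (c * Real.exp (s * δ)) :=
    fun l hl J hJ hJ' => hmin l hl J hJ hJ' s hs
  simpa [mul_assoc] using hminors.norm_apply_le (hg s hs) (by positivity) hij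

/-- Off-diagonal decay: if all non-leading minors `Δ_{[l],J}` of a family of unitary
matrices are `O(e^{sδ})` as `s → -∞`, then all off-diagonal entries are `O(e^{sδ})`. -/
theorem offdiag_decay (n : ℕ) (g : ℝ → Matrix (Fin n) (Fin n) ℂ)
    (hg : ∀ s < (0 : ℝ), g s ∈ Matrix.unitaryGroup (Fin n) ℂ)
    (δ c : ℝ) (hδ : 0 < δ) (hc : 0 < c)
    (hmin : ∀ (l : ℕ) (hl : l ≤ n) (J : Finset (Fin n)) (hJ : J.card = l),
      J ≠ Finset.univ.filter (fun j : Fin n => (j : ℕ) < l) →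
      ∀ s < (0 : ℝ),
        ‖((g s).submatrix (Fin.castLE hl) (J.orderEmbOfFin hJ)).det‖
          ≤ c * Real.exp (s * δ)) :
    ∃ c' > 0, ∀ (i j : Fin n), i ≠ j → ∀ s < (0 : ℝ),
      ‖g s i j‖ ≤ c' * Real.exp (s * δ) :=
  offdiag_decay_general n g hg δ c hc hmin
end

section
/- Let g ∈ GL(n,ℂ) and let i ∈ {2,...,n}, j > i. Set J = {1,...,i-1, j}. If the entries satisfy |g_{k,m}| ≤ ε for all k < i and m ≠ k, and all entries of g are bounded by M ≥ 1, and the minor |Δ_{[i],J}(g)| ≤ ε, then |g_{i,j} · Δ_{[i-1],[i-1]}(g)| ≤ C·ε for a constant C depending only on n and M, where Δ_{[i-1],[i-1]}(g) is the leading principal (i-1)×(i-1) minor (cofactor expansion of the minor Δ_{[i],J} along its last column). -/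
/-!
Expand the minor `Δ_{[i],J}(g)` along its last column, the column `j`. The term of row `i` is
`g_{i,j} · Δ_{[i-1],[i-1]}(g)` (with sign `+1`), while every other term carries an entry `g_{k,j}`
with `k < i`, of size at most `ε`, times an `(i-1)`-minor, which is bounded by `n! M^n`. Hence
`|g_{i,j} · Δ_{[i-1],[i-1]}(g)| ≤ ε + n · ε · n! M^n`.
-/

open Finset
open scoped Nat

namespace Matrix

variable {𝕜 : Type*} [NormedField 𝕜]

theorem norm_det_le_of_forall_norm_le {ι : Type*} [Fintype ι] [DecidableEq ι]
    {A : Matrix ι ι 𝕜} {x : ℝ} (hx : ∀ i j, ‖A i j‖ ≤ x) :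
    ‖A.det‖ ≤ (Fintype.card ι)! * x ^ Fintype.card ι := by
  simpa using det_le (abv := IsAbsoluteValue.toAbsoluteValue (norm : 𝕜 → ℝ)) hx

theorem norm_mul_det_submatrix_succAbove_last_le {m : ℕ}
    (A : Matrix (Fin (m + 1)) (Fin (m + 1)) 𝕜) {ε L : ℝ}
    (hcol : ∀ k : Fin m, ‖A k.castSucc (Fin.last m)‖ ≤ ε)
    (hminor : ∀ k : Fin m,
      ‖(A.submatrix k.castSucc.succAbove (Fin.last m).succAbove).det‖ ≤ L) :
    ‖A (Fin.last m) (Fin.last m) *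
        (A.submatrix (Fin.last m).succAbove (Fin.last m).succAbove).det‖
      ≤ ‖A.det‖ + m * (ε * L) := by
  set T : Fin (m + 1) → 𝕜 := fun k => (-1) ^ (k + Fin.last m : ℕ) * A k (Fin.last m) *
    (A.submatrix k.succAbove (Fin.last m).succAbove).det
  have hexpand : A.det = ∑ k : Fin m, T k.castSucc + T (Fin.last m) := by
    rw [det_succ_column A (Fin.last m), Fin.sum_univ_castSucc]
  have hT_last : T (Fin.last m) = A (Fin.last m) (Fin.last m) *
      (A.submatrix (Fin.last m).succAbove (Fin.last m).succAbove).det := by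
    simp [T, Even.neg_one_pow ⟨m, rfl⟩]
  have hT_le (k : Fin m) : ‖T k.castSucc‖ ≤ ε * L := by
    simp only [T, norm_mul, norm_pow, norm_neg, norm_one, one_pow, one_mul]
    exact mul_le_mul (hcol k) (hminor k) (norm_nonneg _) ((norm_nonneg _).trans (hcol k))
  calc ‖A (Fin.last m) (Fin.last m) *
          (A.submatrix (Fin.last m).succAbove (Fin.last m).succAbove).det‖
      = ‖A.det - ∑ k : Fin m, T k.castSucc‖ := by
        rw [← hT_last, hexpand, add_sub_cancel_left]
    _ ≤ ‖A.det‖ + ∑ k : Fin m, ‖T k.castSucc‖ :=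
      (norm_sub_le _ _).trans (add_le_add_right (norm_sum_le _ _) _)
    _ ≤ ‖A.det‖ + m * (ε * L) := by
      gcongr
      simpa using Finset.sum_le_sum fun k (_ : k ∈ univ) => hT_le k

end Matrix

theorem Finset.orderEmbOfFin_filter_lt_union_singleton {n i : ℕ} {j : Fin n} (hij : i ≤ j)
    (h : ((univ.filter fun m : Fin n => (m : ℕ) < i) ∪ {j}).card = i + 1) :
    ⇑(((univ.filter fun m : Fin n => (m : ℕ) < i) ∪ {j}).orderEmbOfFin h)
      = Fin.snoc (α := fun _ => Fin n) (Fin.castLE (hij.trans j.isLt.le)) j := by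
  refine (orderEmbOfFin_unique h (fun k => ?_) fun a b hab => ?_).symm
  · induction k using Fin.lastCases with
    | last => simp
    | cast k => simp [Fin.snoc_castSucc, k.isLt]
  · induction b using Fin.lastCases with
    | last =>
      induction a using Fin.lastCases with
      | last => exact absurd hab (lt_irrefl _)
      | cast a => simpa [Fin.snoc_castSucc, Fin.lt_def] using a.isLt.trans_le hij
    | cast b =>
      induction a using Fin.lastCases with
      | last => exact absurd hab (not_lt.mpr (Fin.le_last _))
      | cast a => simpa [Fin.snoc_castSucc] using hab

/-- Cofactor-expansion bound: smallness of entries above the diagonal in the first `i-1`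
rows together with smallness of the minor `Δ_{[i],J}`, `J = {1,…,i-1,j}`, forces
`|g_{i,j} · Δ_{[i-1],[i-1]}(g)|` to be small, with a constant depending only on `n, M`. -/
theorem minor_cofactor_bound (n : ℕ) (M : ℝ) (hM : 1 ≤ M) :
    ∃ C > 0, ∀ (g : Matrix (Fin n) (Fin n) ℂ) (ε : ℝ), 0 ≤ ε →
      ∀ (i j : Fin n), 1 ≤ (i : ℕ) → i < j →
      ∀ (hJ : ((Finset.univ.filter (fun m : Fin n => (m : ℕ) < (i : ℕ))) ∪ {j}).card
          = (i : ℕ) + 1),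
        (∀ k m : Fin n, k < i → m ≠ k → ‖g k m‖ ≤ ε) →
        (∀ k m : Fin n, ‖g k m‖ ≤ M) →
        ‖(g.submatrix (Fin.castLE i.isLt)
              (((Finset.univ.filter (fun m : Fin n => (m : ℕ) < (i : ℕ))) ∪ {j}).orderEmbOfFin
                hJ)).det‖ ≤ ε →
        ‖g i j *
            (g.submatrix (Fin.castLE i.isLt.le) (Fin.castLE i.isLt.le)).det‖ ≤ C * ε := by
  refine ⟨1 + n * (n ! * M ^ n), by positivity, fun g ε _ i j _ hij _ hsmall hbound hΔ => ?_⟩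
  rw [Finset.orderEmbOfFin_filter_lt_union_singleton hij.le] at hΔ
  set A := g.submatrix (Fin.castLE i.isLt) (Fin.snoc (α := fun _ => Fin n) (Fin.castLE _) j)
  have hcol (k : Fin i) : ‖A k.castSucc (Fin.last i)‖ ≤ ε := by
    simpa [A] using
      hsmall (Fin.castLE i.isLt k.castSucc) j k.isLt (Fin.ne_of_gt (k.isLt.trans hij))
  have hminor (k : Fin i) :
      ‖(A.submatrix k.castSucc.succAbove (Fin.last i).succAbove).det‖ ≤ n ! * M ^ n :=
    calc _ ≤ (i ! : ℝ) * M ^ (i : ℕ) := by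
          simpa using Matrix.norm_det_le_of_forall_norm_le
            (A := A.submatrix k.castSucc.succAbove (Fin.last i).succAbove) fun _ _ => hbound _ _
      _ ≤ n ! * M ^ n := by
          gcongr <;> first | exact hM | exact i.isLt.le
  have hA_last : A (Fin.last i) (Fin.last i) = g i j := by simp [A]; rfl
  have hA_minor : A.submatrix (Fin.last i).succAbove (Fin.last i).succAbove
      = g.submatrix (Fin.castLE i.isLt.le) (Fin.castLE i.isLt.le) := by
    ext; simp [A]
  calc _ ≤ ‖A.det‖ + i * (ε * (n ! * M ^ n)) := by
        simpa only [hA_last, hA_minor] using A.norm_mul_det_submatrix_succAbove_last_le hcol hminor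
    _ ≤ ε + n * (ε * (n ! * M ^ n)) := by gcongr; exact i.isLt.le
    _ = (1 + n * (n ! * M ^ n)) * ε := by ring
end

section
/- Volume concentration for the SU(2) family: fix ξ > 0 and z₀ ∈ (-1,1). Then the integral ∫₀^{2π}∫_{-1}^{z₀} sinh(2sξ)/(2s(cosh(2sξ)+z·sinh(2sξ))) dz dφ tends to 0 as s → -∞. Equivalently, for every ε > 0 there is s₀ < 0 such that for all s ≤ s₀ the mass of the region {z ≤ z₀} is less than ε, i.e., the volume concentrates near the pole z = 1. -/
open Real Filter

/-! For `s < 0` put `t = 2sξ ≤ 0`, so `sinh t ≤ 0` and `cosh t + sinh t = exp t > 0`. On `z ≤ z₀ < 1`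
this gives `cosh t + z sinh t ≥ (1 - z₀)(-sinh t)`, so the density is squeezed between `0` and
`1 / (2(1 - z₀)(-s))`, and its integral over `[-1, z₀]` is `O(1/|s|)`. -/

noncomputable def su2Density (ξ s z : ℝ) : ℝ :=
  sinh (2 * s * ξ) / (2 * s * (cosh (2 * s * ξ) + z * sinh (2 * s * ξ)))

lemma mul_neg_sinh_lt_cosh_add_mul_sinh {t z z₀ : ℝ} (ht : t ≤ 0) (hz : z ≤ z₀) :
    (1 - z₀) * -sinh t < cosh t + z * sinh t := by
  have hsinh : sinh t ≤ 0 := sinh_nonpos_iff.mpr ht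
  have hexp : 0 < cosh t + sinh t := cosh_add_sinh t ▸ exp_pos t
  nlinarith

lemma cosh_add_mul_sinh_pos {t z : ℝ} (ht : t ≤ 0) (hz : z ≤ 1) : 0 < cosh t + z * sinh t := by
  simpa using mul_neg_sinh_lt_cosh_add_mul_sinh ht hz

section

variable {ξ s z : ℝ}

lemma su2Density_nonneg (hs : s ≤ 0) (hξ : 0 ≤ ξ) (hz : z ≤ 1) : 0 ≤ su2Density ξ s z := by
  have ht : 2 * s * ξ ≤ 0 := mul_nonpos_of_nonpos_of_nonneg (by linarith) hξ
  exact div_nonneg_of_nonpos (sinh_nonpos_iff.mpr ht) <|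
    mul_nonpos_of_nonpos_of_nonneg (by linarith) (cosh_add_mul_sinh_pos ht hz).le

lemma su2Density_le {z₀ : ℝ} (hs : s < 0) (hξ : 0 ≤ ξ) (hz : z ≤ z₀) (hz₀ : z₀ < 1) :
    su2Density ξ s z ≤ 1 / (2 * (1 - z₀)) / -s := by
  have ht : 2 * s * ξ ≤ 0 := mul_nonpos_of_nonpos_of_nonneg (by linarith) hξ
  have hD := mul_neg_sinh_lt_cosh_add_mul_sinh ht hz
  have hDpos := cosh_add_mul_sinh_pos ht (hz.trans hz₀.le)
  rw [su2Density, ← neg_div_neg_eq, div_div, div_le_div_iff₀ (by nlinarith) (by nlinarith)]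
  nlinarith

lemma continuousOn_su2Density (hs : s < 0) (hξ : 0 ≤ ξ) :
    ContinuousOn (su2Density ξ s) (Set.Iic 1) := by
  have ht : 2 * s * ξ ≤ 0 := mul_nonpos_of_nonpos_of_nonneg (by linarith) hξ
  refine continuousOn_const.div (by fun_prop) fun z hz => ?_
  exact mul_ne_zero (by linarith) (cosh_add_mul_sinh_pos ht hz).ne'

end

lemma tendsto_integral_su2Density_atBot {ξ z₀ : ℝ} (hξ : 0 ≤ ξ) (hz₀ : z₀ ∈ Set.Ioo (-1 : ℝ) 1) :
    Tendsto (fun s => ∫ z in (-1 : ℝ)..z₀, su2Density ξ s z) atBot (nhds 0) := by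
  obtain ⟨hlo, hhi⟩ := hz₀
  have hbound : Tendsto (fun s : ℝ => (z₀ + 1) * (1 / (2 * (1 - z₀)) / -s)) atBot (nhds 0) := by
    simpa using (tendsto_const_nhds.div_atTop tendsto_neg_atBot_atTop).const_mul (z₀ + 1)
  refine tendsto_of_tendsto_of_tendsto_of_le_of_le' tendsto_const_nhds hbound ?_ ?_
  all_goals filter_upwards [eventually_lt_atBot (0 : ℝ)] with s hs
  · exact intervalIntegral.integral_nonneg hlo.le fun z hz =>
      su2Density_nonneg hs.le hξ (hz.2.trans hhi.le)
  · have hint : IntervalIntegrable (su2Density ξ s) MeasureTheory.volume (-1) z₀ :=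
      ((continuousOn_su2Density hs hξ).mono fun z hz => hz.2.trans hhi.le
        ).intervalIntegrable_of_Icc hlo.le
    have := intervalIntegral.integral_mono_on hlo.le hint intervalIntegrable_const
      fun z hz => su2Density_le hs hξ hz.2 hhi
    rwa [intervalIntegral.integral_const, smul_eq_mul, sub_neg_eq_add] at this

/-- Volume concentration for the SU(2) family: for fixed `ξ > 0` and `z₀ ∈ (-1,1)`, the
symplectic volume of the region `{z ≤ z₀}` tends to `0` as `s → -∞`. -/
theorem su2_volume_concentration (ξ z₀ : ℝ) (hξ : 0 < ξ) (hz₀ : z₀ ∈ Set.Ioo (-1 : ℝ) 1) :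
    Tendsto (fun s : ℝ =>
        ∫ _φ in (0:ℝ)..(2 * π), ∫ z in (-1:ℝ)..z₀,
          Real.sinh (2 * s * ξ) / (2 * s * (Real.cosh (2 * s * ξ) + z * Real.sinh (2 * s * ξ))))
      atBot (nhds 0) := by
  simpa [intervalIntegral.integral_const, su2Density] using
    (tendsto_integral_su2Density_atBot hξ.le hz₀).const_mul (2 * π)
end

section
/- Partial derivative estimate (Lemma 3.1 structure): with f(x,s) = x_1 + (1/(2s))·log(1 + Σ_j c_j e^{2s L_j(x)}) as above and L_j(x) ≥ δ on an open set Ω, the gradient satisfies ∂f/∂x_1 = 1 + O(e^{2sδ}) and ∂f/∂x_k = O(e^{2sδ}) for k ≥ 2, uniformly on Ω as s → -∞. Explicitly: |∇f(x,s) - e_1| ≤ C·e^{2sδ} for all x ∈ Ω and s ≤ s₀. -/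
/-!
The chain-rule factor `2s` cancels the prefactor `1/(2s)`, so the derivative of the logarithmic
term is the weighted sum `g⁻¹ • ∑ⱼ cⱼ e^{2s Lⱼ(x)} • Lⱼ` with `g = 1 + ∑ⱼ cⱼ e^{2s Lⱼ(x)}`.
Since `Lⱼ ≥ δ` and `s < 0`, every weight is at most `e^{2sδ}`; for `s` negative enough this also
forces `g ≥ 1/2`, and the bound follows.
-/

open Real Filter

section SoftMin

variable {ι E : Type*} [Fintype ι] [NormedAddCommGroup E] [NormedSpace ℝ E]

theorem hasFDerivAt_inv_mul_log_one_add_sum_exp (t : ℝ) (ht : t ≠ 0) (c : ι → ℝ)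
    (L : ι → StrongDual ℝ E) {x : E} (hx : 1 + ∑ j, c j * exp (t * L j x) ≠ 0) :
    HasFDerivAt (fun y => 1 / t * log (1 + ∑ j, c j * exp (t * L j y)))
      ((1 + ∑ j, c j * exp (t * L j x))⁻¹ • ∑ j, (c j * exp (t * L j x)) • L j) x := by
  have hsum : HasFDerivAt (fun y => 1 + ∑ j, c j * exp (t * L j y))
      (∑ j, c j • exp (t * L j x) • t • L j) x :=
    (HasFDerivAt.fun_sum fun j _ =>
      (((L j).hasFDerivAt.const_mul t).exp).const_mul (c j)).const_add 1
  refine ((hsum.log hx).const_mul (1 / t)).congr_fderiv ?_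
  simp only [smul_smul, Finset.smul_sum]
  refine Finset.sum_congr rfl fun j _ => ?_
  congr 1
  field_simp

theorem norm_sum_mul_exp_smul_le {F : Type*} [SeminormedAddCommGroup F] [NormedSpace ℝ F]
    {t δ : ℝ} (ht : t ≤ 0) (c a : ι → ℝ) (ha : ∀ j, δ ≤ a j) (v : ι → F) :
    ‖∑ j, (c j * exp (t * a j)) • v j‖ ≤ (∑ j, |c j| * ‖v j‖) * exp (t * δ) := by
  calc ‖∑ j, (c j * exp (t * a j)) • v j‖
      ≤ ∑ j, ‖(c j * exp (t * a j)) • v j‖ := norm_sum_le _ _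
    _ ≤ ∑ j, |c j| * ‖v j‖ * exp (t * δ) := Finset.sum_le_sum fun j _ => by
        have hexp : exp (t * a j) ≤ exp (t * δ) :=
          exp_le_exp.2 (mul_le_mul_of_nonpos_left (ha j) ht)
        rw [norm_smul, norm_mul, Real.norm_eq_abs, Real.norm_of_nonneg (exp_pos _).le]
        nlinarith [mul_nonneg (abs_nonneg (c j)) (norm_nonneg (v j))]
    _ = (∑ j, |c j| * ‖v j‖) * exp (t * δ) := (Finset.sum_mul ..).symm

theorem abs_sum_mul_exp_le {t δ : ℝ} (ht : t ≤ 0) (c a : ι → ℝ) (ha : ∀ j, δ ≤ a j) :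
    |∑ j, c j * exp (t * a j)| ≤ (∑ j, |c j|) * exp (t * δ) := by
  simpa using norm_sum_mul_exp_smul_le ht c a ha fun _ => (1 : ℝ)

end SoftMin

theorem exists_neg_forall_le_mul_exp_le (B : ℝ) {δ ε : ℝ} (hδ : 0 < δ) (hε : 0 < ε) :
    ∃ s₀ < (0 : ℝ), ∀ s ≤ s₀, B * exp (2 * s * δ) ≤ ε := by
  have hlim : Tendsto (fun s => B * exp (2 * s * δ)) atBot (nhds 0) := by
    simpa using (tendsto_exp_atBot.comp
      ((tendsto_id.const_mul_atBot two_pos).atBot_mul_const hδ)).const_mul B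
  obtain ⟨a, ha⟩ := eventually_atBot.1 (hlim.eventually_le_const hε)
  exact ⟨min a (-1), by simp, fun s hs => ha s (hs.trans (min_le_left _ _))⟩

theorem partial_derivative_estimate_general (d N : ℕ) (hd : 0 < d)
    (L : Fin N → (Fin d → ℝ) →ₗ[ℝ] ℝ) (c : Fin N → ℝ)
    (Ω : Set (Fin d → ℝ)) (δ : ℝ) (hδ : 0 < δ)
    (hL : ∀ x ∈ Ω, ∀ j, δ ≤ L j x) :
    ∃ C > 0, ∃ s₀ < (0:ℝ), ∀ s ≤ s₀, ∀ x ∈ Ω,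
      ‖fderiv ℝ (fun y : Fin d → ℝ =>
            y ⟨0, hd⟩ + (1 / (2 * s)) * Real.log (1 + ∑ j, c j * Real.exp (2 * s * L j y))) x
          - ContinuousLinearMap.proj (R := ℝ) (φ := fun _ : Fin d => ℝ) ⟨0, hd⟩‖
        ≤ C * Real.exp (2 * s * δ) := by
  set Lc : Fin N → StrongDual ℝ (Fin d → ℝ) := fun j => (L j).toContinuousLinearMap
  set M := ∑ j, |c j| * ‖Lc j‖
  obtain ⟨s₀, hs₀, hsmall⟩ := exists_neg_forall_le_mul_exp_le (∑ j, |c j|) hδ one_half_pos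
  refine ⟨2 * M + 1, by positivity, s₀, hs₀, fun s hs x hx => ?_⟩
  have ht : 2 * s ≤ 0 := by linarith
  set g := 1 + ∑ j, c j * exp (2 * s * L j x)
  have hg : 1 / 2 ≤ g := by
    have hsum := (abs_sum_mul_exp_le ht c (fun j => L j x) (hL x hx)).trans (hsmall s hs)
    linarith [(abs_le.1 hsum).1]
  have hderiv : HasFDerivAt (fun y : Fin d → ℝ =>
      y ⟨0, hd⟩ + (1 / (2 * s)) * log (1 + ∑ j, c j * exp (2 * s * L j y)))
      (ContinuousLinearMap.proj ⟨0, hd⟩ + g⁻¹ • ∑ j, (c j * exp (2 * s * L j x)) • Lc j) x :=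
    (ContinuousLinearMap.proj ⟨0, hd⟩).hasFDerivAt.add
      (hasFDerivAt_inv_mul_log_one_add_sum_exp (2 * s) (by linarith) c Lc
        (by linarith : 0 < g).ne')
  have hD := norm_sum_mul_exp_smul_le ht c (fun j => L j x) (hL x hx) Lc
  have hginv : g⁻¹ ≤ 2 := by rw [inv_le_comm₀ (by linarith) two_pos]; linarith
  rw [hderiv.fderiv, add_sub_cancel_left, norm_smul, Real.norm_of_nonneg (by positivity)]
  calc g⁻¹ * ‖∑ j, (c j * exp (2 * s * L j x)) • Lc j‖
      ≤ 2 * (M * exp (2 * s * δ)) := mul_le_mul hginv hD (norm_nonneg _) two_pos.le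
    _ ≤ (2 * M + 1) * exp (2 * s * δ) := by nlinarith [exp_pos (2 * s * δ)]

/-- Partial derivative estimate (Lemma 3.1 structure): for
`f(x,s) = x₁ + (1/(2s))·log(1 + Σ_j c_j e^{2s L_j(x)})` with linear `L_j ≥ δ` on an open
set `Ω`, one has `‖∇f(x,s) - e₁‖ ≤ C·e^{2sδ}` (as covectors: the derivative is close to
the first coordinate projection) uniformly on `Ω` as `s → -∞`. -/
theorem partial_derivative_estimate (d N : ℕ) (hd : 0 < d)
    (L : Fin N → (Fin d → ℝ) →ₗ[ℝ] ℝ) (c : Fin N → ℝ)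
    (Ω : Set (Fin d → ℝ)) (hΩ : IsOpen Ω) (δ : ℝ) (hδ : 0 < δ)
    (hL : ∀ x ∈ Ω, ∀ j, δ ≤ L j x)
    (hpos : ∀ x ∈ Ω, ∀ s < (0:ℝ), 0 < 1 + ∑ j, c j * Real.exp (2 * s * L j x)) :
    ∃ C > 0, ∃ s₀ < (0:ℝ), ∀ s ≤ s₀, ∀ x ∈ Ω,
      ‖fderiv ℝ (fun y : Fin d → ℝ =>
            y ⟨0, hd⟩ + (1 / (2 * s)) * Real.log (1 + ∑ j, c j * Real.exp (2 * s * L j y))) x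
          - ContinuousLinearMap.proj (R := ℝ) (φ := fun _ : Fin d => ℝ) ⟨0, hd⟩‖
        ≤ C * Real.exp (2 * s * δ) :=
  partial_derivative_estimate_general d N hd L c Ω δ hδ hL
end
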